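/- Let A ∈ ℝ^{m×n} with SVD A = U Σ Vᵀ, let q ≥ 0 be an integer, and set K^(p) = A (AᵀA)^{2q} Aᵀ. For any integer k ≤ rank(A) with σ_k > 0, one has τ_k(K^(p)) = 0 and ρ_k(K^(p)) = ‖Σ_k^{−2q}‖_F · ‖(Σ̄_kᵀ Σ̄_k)^q Σ̄_kᵀ‖_F / ‖Σ̄_k‖_F, and moreover ρ_k(K^(p)) ≤ √k · (σ_{k+1}/σ_k)^{2q}. -/

import Mathlib

open MeasureTheory ProbabilityTheory Matrix

/-- Frobenius norm of a real matrix. -/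
noncomputable def frob {α β : Type*} [Fintype α] [Fintype β] (M : Matrix α β ℝ) : ℝ :=
  Real.sqrt (∑ i, ∑ j, M i j ^ 2)

/-- Orthogonal projection `π(M) = M M⁺` onto the range of a full column rank matrix `M`,
via the explicit formula `M (Mᵀ M)⁻¹ Mᵀ` for the Moore-Penrose inverse. -/
noncomputable def proj {α β : Type*} [Fintype α] [Fintype β] [DecidableEq β]
    (M : Matrix α β ℝ) : Matrix α α ℝ :=
  M * (Mᵀ * M)⁻¹ * Mᵀ

/-- Moore-Penrose inverse `M⁺ = Mᵀ (M Mᵀ)⁻¹` of a full row rank matrix `M`. -/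
noncomputable def rpinv {α β : Type*} [Fintype α] [Fintype β] [DecidableEq α]
    (M : Matrix α β ℝ) : Matrix β α ℝ :=
  Mᵀ * (M * Mᵀ)⁻¹

/-- `X : Ω → ι → ℝ` is a centered Gaussian vector with covariance matrix `K`:
every linear functional `⟨a, X⟩` is a real Gaussian with mean `0` and variance `aᵀ K a`. -/
def IsCenteredGaussian {Ω : Type*} [MeasurableSpace Ω] (μ : Measure Ω)
    {ι : Type*} [Fintype ι] (X : Ω → ι → ℝ) (K : Matrix ι ι ℝ) : Prop :=
  ∀ a : ι → ℝ,
    μ.map (fun ω => ∑ i, a i * X ω i) =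
      gaussianReal 0 (Real.toNNReal (∑ i, ∑ j, a i * K i j * a j))

/-- The positive semidefinite square root of a positive semidefinite matrix
(the definition `Matrix.PosSemidef.sqrt` of the older Mathlib, since removed). -/
noncomputable def Matrix.PosSemidef.sqrt {n : Type*} [Fintype n] [DecidableEq n]
    {A : Matrix n n ℝ} (hA : A.PosSemidef) : Matrix n n ℝ :=
  hA.1.eigenvectorUnitary.1 * Matrix.diagonal ((↑) ∘ (Real.sqrt ·) ∘ hA.1.eigenvalues) *
    (star hA.1.eigenvectorUnitary : Matrix n n ℝ)

lemma psd_sqrt_mul_self' {n : Type*} [Fintype n] [DecidableEq n]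
    {A : Matrix n n ℝ} (hA : A.PosSemidef) : hA.sqrt * hA.sqrt = A := by
  have hW : (star hA.1.eigenvectorUnitary : Matrix n n ℝ) * hA.1.eigenvectorUnitary.1 = 1 :=
    hA.1.eigenvectorUnitary.2.1
  unfold Matrix.PosSemidef.sqrt
  conv_rhs => rw [hA.1.spectral_theorem, Unitary.conjStarAlgAut_apply]
  simp only [Matrix.mul_assoc]
  rw [← Matrix.mul_assoc (star _ : Matrix n n ℝ) hA.1.eigenvectorUnitary.1, hW, Matrix.one_mul,
    ← Matrix.mul_assoc (Matrix.diagonal _), Matrix.diagonal_mul_diagonal]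
  congr 3
  funext i
  simp [Real.mul_self_sqrt (hA.eigenvalues_nonneg i)]

lemma psd_sqrt_transpose' {n : Type*} [Fintype n] [DecidableEq n]
    {A : Matrix n n ℝ} (hA : A.PosSemidef) : hA.sqrtᵀ = hA.sqrt := by
  unfold Matrix.PosSemidef.sqrt
  rw [← Matrix.conjTranspose_eq_transpose_of_trivial]
  simp [Matrix.conjTranspose_mul, Matrix.star_eq_conjTranspose, Matrix.mul_assoc]

section aux
variable {α β : Type*} [Fintype α] [Fintype β] [DecidableEq α] [DecidableEq β]

omit [DecidableEq α] [DecidableEq β] in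
lemma frob_eq_sqrt_trace (M : Matrix α β ℝ) : frob M = Real.sqrt (M * Mᵀ).trace := by
  simp [frob, Matrix.trace, Matrix.mul_apply, Matrix.diag, sq]

omit [DecidableEq β] in
lemma frob_diagonal (w : α → ℝ) : frob (Matrix.diagonal w) = Real.sqrt (∑ i, w i ^ 2) := by
  simp [frob, Matrix.diagonal_apply, apply_ite (· ^ 2), Finset.sum_ite_eq]

lemma conjPow {n : Type*} [Fintype n] [DecidableEq n] (V M : Matrix n n ℝ)
    (h1 : V * Vᵀ = 1) (h2 : Vᵀ * V = 1) (p : ℕ) :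
    (V * M * Vᵀ) ^ p = V * M ^ p * Vᵀ := by
  induction p with
  | zero => simp [h1]
  | succ p ih =>
      rw [pow_succ, ih, pow_succ]
      calc V * M ^ p * Vᵀ * (V * M * Vᵀ) = V * M ^ p * (Vᵀ * V) * M * Vᵀ := by
            simp only [Matrix.mul_assoc]
        _ = V * (M ^ p * M) * Vᵀ := by rw [h2]; simp only [Matrix.mul_assoc, Matrix.mul_one]
        _ = _ := by simp only [Matrix.mul_assoc]

omit [DecidableEq β] in
lemma fromBlocks_diag_pow {n : Type*} [Fintype n] [DecidableEq n]
    (X : Matrix α α ℝ) (Y : Matrix n n ℝ) (p : ℕ) :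
    (Matrix.fromBlocks X 0 0 Y) ^ p = Matrix.fromBlocks (X ^ p) 0 0 (Y ^ p) := by
  induction p with
  | zero => simp [Matrix.fromBlocks_one]
  | succ p ih => rw [pow_succ, ih, pow_succ, Matrix.fromBlocks_multiply]; simp [pow_succ]

lemma sum_fin_ite (n m : ℕ) (g : ℕ → ℝ) :
    ∑ j : Fin n, (if (j : ℕ) < m then g j else 0) = ∑ l ∈ Finset.range (min n m), g l := by
  rw [Fin.sum_univ_eq_sum_range (fun l => if l < m then g l else 0)]
  have : Finset.range (min n m) = Finset.range n ∩ Finset.range m := by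
    ext x; simp [lt_min_iff]
  rw [this, ← Finset.sum_ite_mem]
  simp

lemma sum_diag_rect (m n : ℕ) (f : ℕ → ℝ) :
    ∑ i : Fin m, ∑ j : Fin n, (if (i : ℕ) = (j : ℕ) then f (i : ℕ) else 0)
      = ∑ l ∈ Finset.range (min m n), f l := by
  rw [← sum_fin_ite m n f]
  refine Finset.sum_congr rfl fun i _ => ?_
  rw [Fin.sum_univ_eq_sum_range (fun l => if (i : ℕ) = l then f (i : ℕ) else 0)]
  rw [Finset.sum_ite_eq (Finset.range n) (i : ℕ) (fun l => f (i : ℕ))]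
  simp

lemma trace_fromBlocks_diag {n : Type*} [Fintype n]
    (X : Matrix α α ℝ) (B : Matrix α n ℝ) (C : Matrix n α ℝ) (Y : Matrix n n ℝ) :
    (Matrix.fromBlocks X B C Y).trace = X.trace + Y.trace := by
  simp [Matrix.trace, Fintype.sum_sum_type, Matrix.diag]

end aux
theorem stmt_13
    (k m' n' : ℕ)
    (U : Matrix (Fin k ⊕ Fin m') (Fin k ⊕ Fin m') ℝ)
    (V : Matrix (Fin k ⊕ Fin n') (Fin k ⊕ Fin n') ℝ)
    (σ : ℕ → ℝ)
    (hU : Uᵀ * U = 1) (hV : Vᵀ * V = 1)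
    (hσmono : ∀ i j : ℕ, i ≤ j → σ j ≤ σ i) (hσnn : ∀ i, 0 ≤ σ i)
    (Sk : Matrix (Fin k) (Fin k) ℝ)
    (hSk : Sk = Matrix.diagonal fun i : Fin k => σ ((i : ℕ) + 1))
    (Sb : Matrix (Fin m') (Fin n') ℝ)
    (hSb : Sb = Matrix.of fun (i : Fin m') (j : Fin n') => if (i : ℕ) = (j : ℕ) then σ (k + (i : ℕ) + 1) else 0)
    (A : Matrix (Fin k ⊕ Fin m') (Fin k ⊕ Fin n') ℝ)
    (hA : A = U * Matrix.fromBlocks Sk 0 0 Sb * Vᵀ)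
    (Uk : Matrix (Fin k ⊕ Fin m') (Fin k) ℝ) (hUk : Uk = U.submatrix id Sum.inl)
    (Ub : Matrix (Fin k ⊕ Fin m') (Fin m') ℝ) (hUb : Ub = U.submatrix id Sum.inr)
    (Vk : Matrix (Fin k ⊕ Fin n') (Fin k) ℝ) (hVk : Vk = V.submatrix id Sum.inl)
    (Vb : Matrix (Fin k ⊕ Fin n') (Fin n') ℝ) (hVb : Vb = V.submatrix id Sum.inr)
    (q : ℕ)
    (Kp : Matrix (Fin k ⊕ Fin m') (Fin k ⊕ Fin m') ℝ)
    (hKp : Kp = A * (Aᵀ * A) ^ (2 * q) * Aᵀ) (hKppsd : Kp.PosSemidef)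
    (Kk : Matrix (Fin k) (Fin k) ℝ) (hKkdef : Kk = Ukᵀ * Kp * Uk)
    (hk : k ≤ A.rank) (hσk : 0 < σ k)
    (τ ρ : ℝ)
    (hτ : τ = frob (Ubᵀ * (Kp * Uk) * Kk⁻¹ * Sk) / frob Sb)
    (hρ : ρ = frob ((1 - proj (hKppsd.sqrt * Uk)) * hKppsd.sqrt) *
      Real.sqrt (Sk * Sk * Kk⁻¹).trace / frob Sb) :
    τ = 0 ∧
    ρ = frob ((Sk ^ (2 * q))⁻¹) * frob ((Sbᵀ * Sb) ^ q * Sbᵀ) / frob Sb ∧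
    ρ ≤ Real.sqrt k * (σ (k + 1) / σ k) ^ (2 * q) := by
  clear hVk hVb hk
  have hV' : V * Vᵀ = 1 := mul_eq_one_comm.mp hV
  have hSkT : Skᵀ = Sk := by rw [hSk]; exact Matrix.diagonal_transpose _
  have hσpos : ∀ i : Fin k, 0 < σ ((i : ℕ) + 1) :=
    fun i => lt_of_lt_of_le hσk (hσmono _ _ i.isLt)
  -- column decomposition of U
  have hUcols : U = Matrix.fromCols Uk Ub := by
    subst hUk hUb
    ext i j
    cases j with
    | inl j => simp [Matrix.fromCols]
    | inr j => simp [Matrix.fromCols]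
  have hblocks : Matrix.fromBlocks (Ukᵀ * Uk) (Ukᵀ * Ub) (Ubᵀ * Uk) (Ubᵀ * Ub)
      = Matrix.fromBlocks 1 0 0 1 := by
    rw [← Matrix.fromRows_mul_fromCols, ← Matrix.transpose_fromCols, ← hUcols, hU,
      Matrix.fromBlocks_one]
  obtain ⟨h11, -, h01, -⟩ := Matrix.fromBlocks_inj.mp hblocks
  have hUtU : ∀ {γ : Type} (X : Matrix (Fin k ⊕ Fin m') γ ℝ), Uᵀ * (U * X) = X := by
    intro γ X; rw [← Matrix.mul_assoc, hU, Matrix.one_mul]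
  have hVtV : ∀ {γ : Type} (X : Matrix (Fin k ⊕ Fin n') γ ℝ), Vᵀ * (V * X) = X := by
    intro γ X; rw [← Matrix.mul_assoc, hV, Matrix.one_mul]
  have hmulUk : ∀ {γ : Type} (X : Matrix (Fin k) γ ℝ), Ukᵀ * (Uk * X) = X := by
    intro γ X; rw [← Matrix.mul_assoc, h11, Matrix.one_mul]
  -- the diagonalized form of Kp
  set C : Matrix (Fin k ⊕ Fin m') (Fin k ⊕ Fin n') ℝ := Matrix.fromBlocks Sk 0 0 Sb with hC
  set Λ : Matrix (Fin k) (Fin k) ℝ := Sk ^ (4 * q + 2) with hΛ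
  set Dsb : Matrix (Fin m') (Fin m') ℝ := Sb * (Sbᵀ * Sb) ^ (2 * q) * Sbᵀ with hDsb
  set D : Matrix (Fin k ⊕ Fin m') (Fin k ⊕ Fin m') ℝ :=
    Matrix.fromBlocks Λ 0 0 Dsb with hD
  have hCtC : Cᵀ * C = Matrix.fromBlocks (Sk * Sk) 0 0 (Sbᵀ * Sb) := by
    rw [hC, Matrix.fromBlocks_transpose, Matrix.fromBlocks_multiply]
    simp [hSkT]
  have hCDC : C * (Cᵀ * C) ^ (2 * q) * Cᵀ = D := by
    rw [hCtC, fromBlocks_diag_pow, hC, Matrix.fromBlocks_transpose,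
      Matrix.fromBlocks_multiply, Matrix.fromBlocks_multiply]
    have hSkpow : Sk * (Sk * Sk) ^ (2 * q) * Skᵀ = Λ := by
      rw [hSkT, hΛ, ← sq, ← pow_mul]
      have h2 : (4 : ℕ) * q + 2 = 1 + 2 * (2 * q) + 1 := by ring
      rw [h2, pow_add, pow_add, pow_one]
    rw [hD, hDsb]
    simp [hSkpow, Matrix.mul_assoc]
  have hKpD : Kp = U * D * Uᵀ := by
    have hAtA : Aᵀ * A = V * (Cᵀ * C) * Vᵀ := by
      rw [hA]
      simp only [Matrix.transpose_mul, Matrix.transpose_transpose, Matrix.mul_assoc]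
      rw [hUtU]
    rw [hKp, hAtA, conjPow V (Cᵀ * C) hV' hV (2 * q), hA, ← hCDC]
    simp only [Matrix.transpose_mul, Matrix.transpose_transpose, Matrix.mul_assoc]
    rw [hVtV, hVtV]
  -- key action identities
  have hUtUk : Uᵀ * Uk = Matrix.fromRows (1 : Matrix (Fin k) (Fin k) ℝ)
      (0 : Matrix (Fin m') (Fin k) ℝ) := by
    conv_lhs => rw [hUcols, Matrix.transpose_fromCols, Matrix.fromRows_mul, h11, h01]
  have hKUk : Kp * Uk = Uk * Λ := by
    rw [hKpD]
    simp only [Matrix.mul_assoc]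
    rw [hUtUk, hD, Matrix.fromBlocks_mul_fromRows]
    rw [hUcols, Matrix.fromCols_mul_fromRows]
    simp
  have hKkΛ : Kk = Λ := by
    rw [hKkdef, Matrix.mul_assoc, hKUk, ← Matrix.mul_assoc, h11, Matrix.one_mul]
  have hKpUk' : ∀ {γ : Type} (X : Matrix (Fin k) γ ℝ), Kp * (Uk * X) = Uk * (Λ * X) := by
    intro γ X; rw [← Matrix.mul_assoc, hKUk, Matrix.mul_assoc]
  -- τ = 0
  have hτ0 : τ = 0 := by
    rw [hτ, hKUk, ← Matrix.mul_assoc, h01]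
    simp [frob]
  -- invertibility of Kk
  have hd1 : ∀ i : Fin k, σ ((i : ℕ) + 1) ^ (4 * q + 2) ≠ 0 :=
    fun i => pow_ne_zero _ (hσpos i).ne'
  have hKkdiag : Kk = Matrix.diagonal (fun i : Fin k => σ ((i : ℕ) + 1) ^ (4 * q + 2)) := by
    rw [hKkΛ, hΛ, hSk, Matrix.diagonal_pow]
    rfl
  have hKkinv : Kk⁻¹ = Matrix.diagonal (fun i : Fin k => (σ ((i : ℕ) + 1) ^ (4 * q + 2))⁻¹) := by
    refine Matrix.inv_eq_right_inv ?_
    rw [hKkdiag, Matrix.diagonal_mul_diagonal]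
    have : (fun i : Fin k => σ ((i : ℕ) + 1) ^ (4 * q + 2) * (σ ((i : ℕ) + 1) ^ (4 * q + 2))⁻¹)
        = fun _ => (1 : ℝ) := funext fun i => mul_inv_cancel₀ (hd1 i)
    rw [this, Matrix.diagonal_one]
  have hKkKkinv : Kk * Kk⁻¹ = 1 := by
    rw [hKkinv, hKkdiag, Matrix.diagonal_mul_diagonal]
    have : (fun i : Fin k => σ ((i : ℕ) + 1) ^ (4 * q + 2) * (σ ((i : ℕ) + 1) ^ (4 * q + 2))⁻¹)
        = fun _ => (1 : ℝ) := funext fun i => mul_inv_cancel₀ (hd1 i)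
    rw [this, Matrix.diagonal_one]
  have hKkinvKk : Kk⁻¹ * Kk = 1 := by
    rw [hKkinv, hKkdiag, Matrix.diagonal_mul_diagonal]
    have : (fun i : Fin k => (σ ((i : ℕ) + 1) ^ (4 * q + 2))⁻¹ * σ ((i : ℕ) + 1) ^ (4 * q + 2))
        = fun _ => (1 : ℝ) := funext fun i => inv_mul_cancel₀ (hd1 i)
    rw [this, Matrix.diagonal_one]
  have hinv2 : ∀ {γ : Type} (X : Matrix (Fin k) γ ℝ), Kk * (Kk⁻¹ * X) = X := by
    intro γ X; rw [← Matrix.mul_assoc, hKkKkinv, Matrix.one_mul]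
  have hinv1 : ∀ {γ : Type} (X : Matrix (Fin k) γ ℝ), Kk⁻¹ * (Kk * X) = X := by
    intro γ X; rw [← Matrix.mul_assoc, hKkinvKk, Matrix.one_mul]
  -- square root of Kp
  set S : Matrix (Fin k ⊕ Fin m') (Fin k ⊕ Fin m') ℝ := hKppsd.sqrt with hSdef
  have hS2 : S * S = Kp := psd_sqrt_mul_self' hKppsd
  have hSsym : Sᵀ = S := by
    exact psd_sqrt_transpose' hKppsd
  have hS2' : ∀ {γ : Type} (X : Matrix (Fin k ⊕ Fin m') γ ℝ), S * (S * X) = Kp * X := by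
    intro γ X; rw [← Matrix.mul_assoc, hS2]
  have hproj : proj (S * Uk) = S * (Uk * (Kk⁻¹ * (Ukᵀ * S))) := by
    unfold proj
    have htr : (S * Uk)ᵀ = Ukᵀ * S := by rw [Matrix.transpose_mul, hSsym]
    rw [htr]
    have hmid : Ukᵀ * S * (S * Uk) = Kk := by
      rw [Matrix.mul_assoc, hS2', hKkdef, Matrix.mul_assoc]
    rw [hmid]
    simp only [Matrix.mul_assoc]
  set P : Matrix (Fin k ⊕ Fin m') (Fin k ⊕ Fin m') ℝ := S * (Uk * (Kk⁻¹ * (Ukᵀ * S))) with hP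
  have hKkinvT : (Kk⁻¹)ᵀ = Kk⁻¹ := by rw [hKkinv, Matrix.diagonal_transpose]
  have hPt : Pᵀ = P := by
    rw [hP]
    simp only [Matrix.transpose_mul, Matrix.transpose_transpose, hSsym, hKkinvT]
    simp only [Matrix.mul_assoc]
  have hPP : P * P = P := by
    rw [hP]
    simp only [Matrix.mul_assoc]
    rw [hS2', hKpUk', hmulUk, ← hKkΛ, hinv1]
  have h1P : (1 - P) * (1 - P) = 1 - P := by
    rw [Matrix.sub_mul, Matrix.one_mul, Matrix.mul_sub, Matrix.mul_one, hPP, sub_self, sub_zero]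
  -- the squared Frobenius norm of the residual
  have htKp : Kp.trace = Λ.trace + Dsb.trace := by
    rw [hKpD, Matrix.trace_mul_comm, ← Matrix.mul_assoc, hU, Matrix.one_mul, hD,
      trace_fromBlocks_diag]
  have htKpP : (Kp * P).trace = Λ.trace := by
    rw [hP]
    have step1 : Kp * (S * (Uk * (Kk⁻¹ * (Ukᵀ * S)))) = Kp * (S * (Uk * (Kk⁻¹ * Ukᵀ))) * S := by
      simp only [Matrix.mul_assoc]
    rw [step1, Matrix.trace_mul_comm]
    have hSKp : ∀ {γ : Type} (X : Matrix (Fin k ⊕ Fin m') γ ℝ), S * (Kp * X) = Kp * (S * X) := by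
      intro γ X
      rw [← Matrix.mul_assoc, ← Matrix.mul_assoc, ← hS2]
      simp only [Matrix.mul_assoc]
    have hΛinv : ∀ {γ : Type} (X : Matrix (Fin k) γ ℝ), Λ * (Kk⁻¹ * X) = X := by
      intro γ X; rw [← hKkΛ]; exact hinv2 X
    rw [hSKp, hS2', hKpUk', hKpUk', hΛinv, Matrix.trace_mul_comm, Matrix.mul_assoc, h11,
      Matrix.mul_one]
  have hfrobM : frob ((1 - proj (S * Uk)) * S) = Real.sqrt Dsb.trace := by
    rw [frob_eq_sqrt_trace, hproj]
    congr 1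
    have ht' : ((1 - P) * S)ᵀ = S * (1 - P) := by
      rw [Matrix.transpose_mul, hSsym, Matrix.transpose_sub, Matrix.transpose_one, hPt]
    rw [ht']
    have step : (1 - P) * S * (S * (1 - P)) = (1 - P) * (Kp * (1 - P)) := by
      simp only [Matrix.mul_assoc]
      rw [hS2']
    rw [step, Matrix.trace_mul_comm]
    have step2 : Kp * (1 - P) * (1 - P) = Kp * (1 - P) := by
      rw [Matrix.mul_assoc, h1P]
    rw [step2, Matrix.mul_sub, Matrix.mul_one, Matrix.trace_sub, htKp, htKpP]
    ring
  -- entrywise computations with Sb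
  set d2 : Fin n' → ℝ := fun j => if (j : ℕ) < m' then σ (k + (j : ℕ) + 1) ^ 2 else 0 with hd2
  have hSbtSb : Sbᵀ * Sb = Matrix.diagonal d2 := by
    ext j j'
    rw [Matrix.mul_apply]
    by_cases hjj : j = j'
    · subst hjj
      rw [Matrix.diagonal_apply_eq]
      simp only [hSb, Matrix.transpose_apply, Matrix.of_apply]
      have hterm : ∀ l : Fin m',
          (if (l : ℕ) = (j : ℕ) then σ (k + (l : ℕ) + 1) else 0) *
            (if (l : ℕ) = (j : ℕ) then σ (k + (l : ℕ) + 1) else 0)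
          = if (l : ℕ) = (j : ℕ) then σ (k + (l : ℕ) + 1) ^ 2 else 0 := by
        intro l; split_ifs <;> ring
      simp only [hterm]
      rw [Fin.sum_univ_eq_sum_range (fun l => if l = (j : ℕ) then σ (k + l + 1) ^ 2 else 0)]
      rw [Finset.sum_ite_eq' (Finset.range m') ((j : ℕ)) (fun l => σ (k + l + 1) ^ 2)]
      simp [hd2]
    · rw [Matrix.diagonal_apply_ne _ hjj]
      apply Finset.sum_eq_zero
      intro l _
      simp only [hSb, Matrix.transpose_apply, Matrix.of_apply]
      split_ifs with h1 h2 <;>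
        first
          | exact absurd (Fin.val_injective (h1.symm.trans h2)) hjj
          | simp
  have htDsb : Dsb.trace = ∑ l ∈ Finset.range (min n' m'), σ (k + l + 1) ^ (4 * q + 2) := by
    rw [hDsb, Matrix.trace_mul_comm, ← Matrix.mul_assoc, hSbtSb, Matrix.diagonal_pow,
      Matrix.diagonal_mul_diagonal, Matrix.trace_diagonal]
    rw [← sum_fin_ite n' m' (fun l => σ (k + l + 1) ^ (4 * q + 2))]
    refine Finset.sum_congr rfl fun j _ => ?_
    by_cases h : (j : ℕ) < m'
    · simp only [hd2, Pi.pow_apply, if_pos h]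
      rw [← pow_mul, ← pow_add]
      congr 1
      ring
    · simp only [hd2, Pi.pow_apply, if_neg h, zero_mul]
  have hfrobN : frob ((Sbᵀ * Sb) ^ q * Sbᵀ)
      = Real.sqrt (∑ l ∈ Finset.range (min n' m'), σ (k + l + 1) ^ (4 * q + 2)) := by
    unfold frob
    congr 1
    rw [← sum_diag_rect n' m' (fun l => σ (k + l + 1) ^ (4 * q + 2))]
    refine Finset.sum_congr rfl fun j _ => Finset.sum_congr rfl fun i _ => ?_
    rw [hSbtSb, Matrix.diagonal_pow, Matrix.diagonal_mul, Matrix.transpose_apply]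
    simp only [hSb, Matrix.of_apply, Pi.pow_apply, hd2]
    by_cases h : (j : ℕ) = (i : ℕ)
    · have him : (j : ℕ) < m' := h ▸ i.isLt
      rw [if_pos h.symm, if_pos him, if_pos h, ← h]
      ring
    · have h' : ¬((i : ℕ) = (j : ℕ)) := fun hh => h hh.symm
      rw [if_neg h', if_neg h, mul_zero]
      norm_num
  have hfrobSb : frob Sb = Real.sqrt (∑ l ∈ Finset.range (min n' m'), σ (k + l + 1) ^ 2) := by
    unfold frob
    congr 1
    rw [show min n' m' = min m' n' from Nat.min_comm _ _,
      ← sum_diag_rect m' n' (fun l => σ (k + l + 1) ^ 2)]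
    refine Finset.sum_congr rfl fun i _ => Finset.sum_congr rfl fun j _ => ?_
    simp only [hSb, Matrix.of_apply]
    split_ifs <;> norm_num
  -- the Sk pieces
  have htrace2 : (Sk * Sk * Kk⁻¹).trace = ∑ i : Fin k, ((σ ((i : ℕ) + 1) ^ (2 * q))⁻¹) ^ 2 := by
    rw [hKkinv, hSk, Matrix.diagonal_mul_diagonal, Matrix.diagonal_mul_diagonal,
      Matrix.trace_diagonal]
    refine Finset.sum_congr rfl fun i _ => ?_
    have hne : σ ((i : ℕ) + 1) ≠ 0 := (hσpos i).ne'
    field_simp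
    ring
  have hSkq : Sk ^ (2 * q) = Matrix.diagonal (fun i : Fin k => σ ((i : ℕ) + 1) ^ (2 * q)) := by
    rw [hSk, Matrix.diagonal_pow]
    rfl
  have hSkqinv : (Sk ^ (2 * q))⁻¹
      = Matrix.diagonal (fun i : Fin k => (σ ((i : ℕ) + 1) ^ (2 * q))⁻¹) := by
    refine Matrix.inv_eq_right_inv ?_
    rw [hSkq, Matrix.diagonal_mul_diagonal]
    have : (fun i : Fin k => σ ((i : ℕ) + 1) ^ (2 * q) * (σ ((i : ℕ) + 1) ^ (2 * q))⁻¹)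
        = fun _ => (1 : ℝ) :=
      funext fun i => mul_inv_cancel₀ (pow_ne_zero _ (hσpos i).ne')
    rw [this, Matrix.diagonal_one]
  have hfrobSkinv : frob ((Sk ^ (2 * q))⁻¹)
      = Real.sqrt (∑ i : Fin k, ((σ ((i : ℕ) + 1) ^ (2 * q))⁻¹) ^ 2) := by
    rw [hSkqinv, frob_diagonal]
  -- assemble ρ
  have hρval : ρ = Real.sqrt (∑ l ∈ Finset.range (min n' m'), σ (k + l + 1) ^ (4 * q + 2))
      * Real.sqrt (∑ i : Fin k, ((σ ((i : ℕ) + 1) ^ (2 * q))⁻¹) ^ 2)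
      / Real.sqrt (∑ l ∈ Finset.range (min n' m'), σ (k + l + 1) ^ 2) := by
    rw [hρ, hfrobM, htDsb, htrace2, hfrobSb]
  refine ⟨hτ0, ?_, ?_⟩
  · rw [hρval, hfrobSkinv, hfrobN, hfrobSb]
    ring
  · -- the inequality
    set F1 : ℝ := Real.sqrt (∑ l ∈ Finset.range (min n' m'), σ (k + l + 1) ^ (4 * q + 2)) with hF1
    set F2 : ℝ := Real.sqrt (∑ i : Fin k, ((σ ((i : ℕ) + 1) ^ (2 * q))⁻¹) ^ 2) with hF2
    set F3 : ℝ := Real.sqrt (∑ l ∈ Finset.range (min n' m'), σ (k + l + 1) ^ 2) with hF3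
    have hF1n : 0 ≤ F1 := hF1 ▸ Real.sqrt_nonneg _
    have hF2n : 0 ≤ F2 := hF2 ▸ Real.sqrt_nonneg _
    have hF3n : 0 ≤ F3 := hF3 ▸ Real.sqrt_nonneg _
    have hpow4 : (σ (k + 1) ^ (2 * q)) ^ 2 = σ (k + 1) ^ (4 * q) := by
      rw [← pow_mul]
      congr 1
      ring
    have hb1 : F1 ≤ σ (k + 1) ^ (2 * q) * F3 := by
      rw [hF1, hF3]
      have hx : σ (k + 1) ^ (2 * q) * Real.sqrt (∑ l ∈ Finset.range (min n' m'), σ (k + l + 1) ^ 2)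
          = Real.sqrt ((σ (k + 1) ^ (2 * q)) ^ 2 * ∑ l ∈ Finset.range (min n' m'), σ (k + l + 1) ^ 2) := by
        rw [Real.sqrt_mul (by positivity), Real.sqrt_sq (pow_nonneg (hσnn _) _)]
      rw [hx]
      apply Real.sqrt_le_sqrt
      rw [Finset.mul_sum]
      apply Finset.sum_le_sum
      intro l _
      have h1 : σ (k + l + 1) ≤ σ (k + 1) := hσmono _ _ (by omega)
      have h2 : σ (k + l + 1) ^ (4 * q) ≤ σ (k + 1) ^ (4 * q) := pow_le_pow_left₀ (hσnn _) h1 _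
      calc σ (k + l + 1) ^ (4 * q + 2) = σ (k + l + 1) ^ (4 * q) * σ (k + l + 1) ^ 2 := by
            rw [← pow_add]
        _ ≤ σ (k + 1) ^ (4 * q) * σ (k + l + 1) ^ 2 :=
            mul_le_mul_of_nonneg_right h2 (sq_nonneg _)
        _ = (σ (k + 1) ^ (2 * q)) ^ 2 * σ (k + l + 1) ^ 2 := by rw [hpow4]
    have hb2 : F2 ≤ Real.sqrt k * (σ k ^ (2 * q))⁻¹ := by
      rw [hF2]
      have hx : Real.sqrt k * (σ k ^ (2 * q))⁻¹
          = Real.sqrt (k * ((σ k ^ (2 * q))⁻¹) ^ 2) := by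
        rw [Real.sqrt_mul (Nat.cast_nonneg k),
          Real.sqrt_sq (inv_nonneg.mpr (pow_nonneg (hσnn _) _))]
      rw [hx]
      apply Real.sqrt_le_sqrt
      calc ∑ i : Fin k, ((σ ((i : ℕ) + 1) ^ (2 * q))⁻¹) ^ 2
          ≤ ∑ _i : Fin k, ((σ k ^ (2 * q))⁻¹) ^ 2 := by
            apply Finset.sum_le_sum
            intro i _
            have h1 : σ k ≤ σ ((i : ℕ) + 1) := hσmono _ _ i.isLt
            have h2 : σ k ^ (2 * q) ≤ σ ((i : ℕ) + 1) ^ (2 * q) :=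
              pow_le_pow_left₀ hσk.le h1 _
            have h3 : (σ ((i : ℕ) + 1) ^ (2 * q))⁻¹ ≤ (σ k ^ (2 * q))⁻¹ :=
              inv_anti₀ (pow_pos hσk _) h2
            exact pow_le_pow_left₀ (inv_nonneg.mpr (pow_nonneg (hσnn _) _)) h3 2
        _ = k * ((σ k ^ (2 * q))⁻¹) ^ 2 := by
            rw [Finset.sum_const, Finset.card_univ, Fintype.card_fin, nsmul_eq_mul]
    have hσkq : (0 : ℝ) < σ k ^ (2 * q) := pow_pos hσk _
    rcases eq_or_lt_of_le hF3n with hc | hc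
    · have hF1z : F1 = 0 := by
        refine le_antisymm ?_ hF1n
        rw [← hc, mul_zero] at hb1
        exact hb1
      rw [hρval, hF1z, zero_mul, zero_div]
      exact mul_nonneg (Real.sqrt_nonneg _)
        (pow_nonneg (div_nonneg (hσnn _) (hσnn _)) _)
    · rw [hρval]
      calc F1 * F2 / F3
          ≤ (σ (k + 1) ^ (2 * q) * F3) * (Real.sqrt k * (σ k ^ (2 * q))⁻¹) / F3 := by
            gcongr
            exact mul_nonneg (pow_nonneg (hσnn _) _) hF3n
        _ = Real.sqrt k * (σ (k + 1) / σ k) ^ (2 * q) := by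
            rw [div_pow]
            field_simp
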